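/- arXiv:math/0408241 — 2 statements merged into one kernel-verified Lean document; each statement's English description precedes it below -/
import Mathlib

section
/- Consider a particle in the square [0, ℓ]² (ℓ a positive integer) moving with unit speed perpendicular to the sides: upon hitting a side it reflects to move perpendicularly away from that side. Then every trajectory starting on the boundary is periodic with period dividing 4ℓ in time. -/
/-- The boundary of the square `[0, ℓ]²`. -/
def onSquareBoundary (ℓ : ℝ) (p : ℝ × ℝ) : Prop :=
  p.1 ∈ Set.Icc 0 ℓ ∧ p.2 ∈ Set.Icc 0 ℓ ∧ (p.1 = 0 ∨ p.1 = ℓ ∨ p.2 = 0 ∨ p.2 = ℓ)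

/-- A corner of the square `[0, ℓ]²`. -/
def isSquareCorner (ℓ : ℝ) (p : ℝ × ℝ) : Prop :=
  (p.1 = 0 ∨ p.1 = ℓ) ∧ (p.2 = 0 ∨ p.2 = ℓ)

/-- The inward unit normal of the side of the square `[0, ℓ]²` containing a
(non-corner) boundary point. -/
noncomputable def inwardNormal (ℓ : ℝ) (p : ℝ × ℝ) : ℝ × ℝ :=
  if p.1 = 0 then (1, 0)
  else if p.1 = ℓ then (-1, 0)
  else if p.2 = 0 then (0, 1)
  else (0, -1)

/-- Pseudo billiard in the square `[0,ℓ]²` with the perpendicular reflection law: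
the particle moves with unit speed, and at each collision its velocity becomes the
inward unit normal of the side it hit.  Every trajectory starting on the boundary is
periodic with (time) period dividing `4ℓ`. -/
theorem square_pseudo_billiard_periodic (ℓ : ℕ) (hℓ : 0 < ℓ) (γ : ℝ → ℝ × ℝ)
    (t : ℕ → ℝ) (ht0 : t 0 = 0) (htmono : StrictMono t)
    (htop : Filter.Tendsto t Filter.atTop Filter.atTop)
    (hbd : ∀ k, onSquareBoundary (ℓ : ℝ) (γ (t k)))
    (hnc : ∀ k, ¬ isSquareCorner (ℓ : ℝ) (γ (t k)))
    (hseg : ∀ k, ∀ s ∈ Set.Icc (t k) (t (k + 1)),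
      γ s = γ (t k) + (s - t k) • inwardNormal (ℓ : ℝ) (γ (t k)))
    (hint : ∀ k, ∀ s ∈ Set.Ioo (t k) (t (k + 1)), ¬ onSquareBoundary (ℓ : ℝ) (γ s)) :
    ∀ s : ℝ, 0 ≤ s → γ (s + 4 * ℓ) = γ s := by
  have hlp : (0:ℝ) < (ℓ:ℝ) := by exact_mod_cast hℓ
  have hlne : (ℓ:ℝ) ≠ 0 := ne_of_gt hlp
  -- The key step: every bounce segment has length ℓ, crossing to the opposite side.
  have step : ∀ k, t (k+1) = t k + ℓ ∧
      γ (t (k+1)) = γ (t k) + (ℓ:ℝ) • inwardNormal (ℓ:ℝ) (γ (t k)) ∧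
      inwardNormal (ℓ:ℝ) (γ (t (k+1))) = - inwardNormal (ℓ:ℝ) (γ (t k)) := by
    intro k
    have hlt : t k < t (k+1) := htmono (Nat.lt_succ_self k)
    have hΔ : 0 < t (k+1) - t k := sub_pos.2 hlt
    have hq := hseg k (t (k+1)) ⟨le_of_lt hlt, le_refl _⟩
    obtain ⟨hx, hy, hside⟩ := hbd k
    obtain ⟨hx', hy', hside'⟩ := hbd (k+1)
    have hncK := hnc k
    unfold isSquareCorner at hncK
    push_neg at hncK
    set p := γ (t k) with hp
    set Δ := t (k+1) - t k with hΔdef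
    rcases hside with h1 | h1 | h1 | h1
    · -- p.1 = 0 : moving right, hits x = ℓ
      obtain ⟨hy0, hyl⟩ := hncK (Or.inl h1)
      have hn : inwardNormal (ℓ:ℝ) p = (1, 0) := by simp [inwardNormal, h1]
      rw [hn] at hq
      have hq1 : (γ (t (k+1))).1 = Δ := by rw [hq]; simp [h1]
      have hq2 : (γ (t (k+1))).2 = p.2 := by rw [hq]; simp
      rw [hq1, hq2] at hside'
      have hΔℓ : Δ = ℓ := by
        rcases hside' with h | h | h | h
        · exact absurd h (ne_of_gt hΔ)
        · exact h
        · exact absurd h hy0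
        · exact absurd h hyl
      have hΔ' : t (k+1) = t k + ℓ := by rw [← hΔℓ]; simp [hΔdef]
      refine ⟨hΔ', ?_, ?_⟩
      · rw [hq, hΔℓ, hn]
      · rw [hn]
        have : (γ (t (k+1))).1 = (ℓ:ℝ) := by rw [hq1, hΔℓ]
        simp [inwardNormal, this, hlne, Prod.ext_iff]
    · -- p.1 = ℓ : moving left, hits x = 0
      obtain ⟨hy0, hyl⟩ := hncK (Or.inr h1)
      have hp1 : p.1 ≠ 0 := by rw [h1]; exact hlne
      have hn : inwardNormal (ℓ:ℝ) p = (-1, 0) := by simp [inwardNormal, h1, hlne]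
      rw [hn] at hq
      have hq1 : (γ (t (k+1))).1 = (ℓ:ℝ) - Δ := by rw [hq]; simp [h1]; ring
      have hq2 : (γ (t (k+1))).2 = p.2 := by rw [hq]; simp
      rw [hq1, hq2] at hside'
      have hΔℓ : Δ = ℓ := by
        rcases hside' with h | h | h | h
        · linarith
        · linarith
        · exact absurd h hy0
        · exact absurd h hyl
      have hΔ' : t (k+1) = t k + ℓ := by rw [← hΔℓ]; simp [hΔdef]
      refine ⟨hΔ', ?_, ?_⟩
      · rw [hq, hΔℓ, hn]
      · rw [hn]
        have : (γ (t (k+1))).1 = (0:ℝ) := by rw [hq1, hΔℓ]; ring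
        simp [inwardNormal, this, Prod.ext_iff]
    · -- p.2 = 0 : moving up, hits y = ℓ
      obtain ⟨hx0, hxl⟩ : p.1 ≠ 0 ∧ p.1 ≠ (ℓ:ℝ) := by
        constructor <;> intro h <;> exact (hncK (by tauto)).1 h1
      have hn : inwardNormal (ℓ:ℝ) p = (0, 1) := by simp [inwardNormal, h1, hx0, hxl]
      rw [hn] at hq
      have hq1 : (γ (t (k+1))).1 = p.1 := by rw [hq]; simp
      have hq2 : (γ (t (k+1))).2 = Δ := by rw [hq]; simp [h1]
      rw [hq1, hq2] at hside'
      have hΔℓ : Δ = ℓ := by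
        rcases hside' with h | h | h | h
        · exact absurd h hx0
        · exact absurd h hxl
        · exact absurd h (ne_of_gt hΔ)
        · exact h
      have hΔ' : t (k+1) = t k + ℓ := by rw [← hΔℓ]; simp [hΔdef]
      refine ⟨hΔ', ?_, ?_⟩
      · rw [hq, hΔℓ, hn]
      · rw [hn]
        have h2 : (γ (t (k+1))).2 = (ℓ:ℝ) := by rw [hq2, hΔℓ]
        simp [inwardNormal, hq1, hx0, hxl, h2, hlne, Prod.ext_iff]
    · -- p.2 = ℓ : moving down, hits y = 0
      obtain ⟨hx0, hxl⟩ : p.1 ≠ 0 ∧ p.1 ≠ (ℓ:ℝ) := by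
        constructor <;> intro h <;> exact (hncK (by tauto)).2 h1
      have hn : inwardNormal (ℓ:ℝ) p = (0, -1) := by
        have : p.2 ≠ 0 := by rw [h1]; exact hlne
        simp [inwardNormal, hx0, hxl, this]
      rw [hn] at hq
      have hq1 : (γ (t (k+1))).1 = p.1 := by rw [hq]; simp
      have hq2 : (γ (t (k+1))).2 = (ℓ:ℝ) - Δ := by rw [hq]; simp [h1]; ring
      rw [hq1, hq2] at hside'
      have hΔℓ : Δ = ℓ := by
        rcases hside' with h | h | h | h
        · exact absurd h hx0
        · exact absurd h hxl
        · linarith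
        · linarith
      have hΔ' : t (k+1) = t k + ℓ := by rw [← hΔℓ]; simp [hΔdef]
      refine ⟨hΔ', ?_, ?_⟩
      · rw [hq, hΔℓ, hn]
      · rw [hn]
        have h2 : (γ (t (k+1))).2 = (0:ℝ) := by rw [hq2, hΔℓ]; ring
        simp [inwardNormal, hq1, hx0, hxl, h2, Prod.ext_iff]
  -- consequently t k = k * ℓ
  have t_eq : ∀ k : ℕ, t k = k * ℓ := by
    intro k
    induction k with
    | zero => simpa using ht0
    | succ n ih => rw [(step n).1, ih]; push_cast; ring
  -- period 2 on bounce points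
  have per2 : ∀ k, γ (t (k+2)) = γ (t k) := by
    intro k
    have h1 := (step k).2.1
    have h2 := (step (k+1)).2.1
    have h3 := (step k).2.2
    rw [h2, h3, h1, smul_neg, add_neg_cancel_right]
  have per4 : ∀ k, γ (t (k+4)) = γ (t k) := by
    intro k
    have := per2 (k+2)
    rw [show k+2+2 = k+4 from rfl] at this
    rw [this, per2 k]
  -- main argument
  intro s hs
  set k := Nat.floor (s / (ℓ:ℝ)) with hk
  have hdiv : 0 ≤ s / (ℓ:ℝ) := div_nonneg hs (le_of_lt hlp)
  have hfl : (k:ℝ) ≤ s / (ℓ:ℝ) := Nat.floor_le hdiv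
  have hfu : s / (ℓ:ℝ) < (k:ℝ) + 1 := Nat.lt_floor_add_one _
  have hk1 : (k:ℝ) * ℓ ≤ s := (le_div_iff₀ hlp).1 hfl
  have hk2 : s ≤ ((k:ℝ) + 1) * ℓ := by
    have := (div_lt_iff₀ hlp).1 hfu
    linarith
  have hmem1 : s ∈ Set.Icc (t k) (t (k+1)) := by
    rw [t_eq k, t_eq (k+1)]
    push_cast
    exact ⟨hk1, hk2⟩
  have hmem2 : s + 4 * ℓ ∈ Set.Icc (t (k+4)) (t (k+4+1)) := by
    rw [t_eq (k+4), t_eq (k+4+1)]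
    push_cast
    constructor <;> nlinarith
  have h1 := hseg k s hmem1
  have h2 := hseg (k+4) (s + 4*ℓ) hmem2
  rw [h2, h1, per4 k, t_eq k, t_eq (k+4)]
  push_cast
  ring_nf
end

section
/- Let T : [0,1] → [0,1] be a piecewise linear map with a finite partition 0 = a_0 < a_1 < ⋯ < a_K = 1 such that on each interval [a_{i-1}, a_i] the map T is affine with |slope| ≥ λ > 1 and maps [a_{i-1}, a_i] onto a union of partition intervals (strong Markov property). If moreover for every i there exists n with T^n([a_{i-1},a_i]) = [0,1], then T admits an invariant probability measure absolutely continuous with respect to Lebesgue measure. -/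
/-!
Each branch is affine and maps its interval onto a union of partition intervals, so the
pushforward under `T` of Lebesgue measure on a partition interval is a nonnegative combination of
Lebesgue measures on partition intervals. On step densities the transfer operator therefore acts
by a nonnegative matrix which preserves total mass. Such a matrix leaves the compact convex set of
nonnegative vectors of total mass one invariant, and a limit point of Cesàro averages of an orbit
in that set is a fixed vector: the corresponding step density is invariant.
-/

open MeasureTheory Filter Topology Matrix Function
open scoped ENNReal

theorem ContinuousLinearMap.exists_fixedPoint_of_mapsTo_of_isCompact_of_convex
    {E : Type*} [NormedAddCommGroup E] [NormedSpace ℝ E] (f : E →L[ℝ] E) {S : Set E}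
    (hcomp : IsCompact S) (hconv : Convex ℝ S) (hne : S.Nonempty) (hf : Set.MapsTo f S S) :
    ∃ c ∈ S, f c = c := by
  obtain ⟨x, hx⟩ := hne
  have horbit : ∀ n, f^[n] x ∈ S := fun n => hf.iterate n hx
  set b : ℕ → E := fun n => ((n : ℝ) + 1)⁻¹ • ∑ i ∈ Finset.range (n + 1), f^[i] x
  have hbS : ∀ n, b n ∈ S := fun n => by
    have := hconv.sum_mem (t := Finset.range (n + 1)) (w := fun _ => ((n : ℝ) + 1)⁻¹)
      (fun _ _ => by positivity) (by simp [field]) (fun i _ => horbit i)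
    simpa only [b, Finset.smul_sum] using this
  -- the Cesàro averages are almost invariant: the sum telescopes
  have hdefect : ∀ n, f (b n) - b n = ((n : ℝ) + 1)⁻¹ • (f^[n + 1] x - x) := fun n => by
    simp only [b, map_smul, map_sum, ← smul_sub, ← Finset.sum_sub_distrib,
      ← Function.iterate_succ_apply' f]
    rw [Finset.sum_range_sub (fun i => f^[i] x), Function.iterate_zero_apply]
  obtain ⟨C, hC⟩ := hcomp.isBounded.exists_norm_le
  have hdefect_lim : Tendsto (fun n => f (b n) - b n) atTop (𝓝 0) := by
    simp only [hdefect]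
    refine Tendsto.zero_smul_isBoundedUnder_le ?_ (isBoundedUnder_of ⟨C + C, fun n => ?_⟩)
    · exact tendsto_inv_atTop_zero.comp (tendsto_natCast_atTop_atTop.atTop_add tendsto_const_nhds)
    · exact (norm_sub_le _ _).trans (add_le_add (hC _ (horbit _)) (hC _ hx))
  obtain ⟨c, hcS, φ, hφ, hlim⟩ := hcomp.tendsto_subseq hbS
  have : Tendsto (fun n => f (b (φ n)) - b (φ n)) atTop (𝓝 (f c - c)) :=
    ((f.continuous.tendsto c).comp hlim).sub hlim
  exact ⟨c, hcS, sub_eq_zero.1 (tendsto_nhds_unique this (hdefect_lim.comp hφ.tendsto_atTop))⟩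

theorem Matrix.exists_nonneg_mulVec_eq_self_of_vecMul_eq {ι : Type*} [Fintype ι]
    [Nonempty ι] (M : Matrix ι ι ℝ) (hM : ∀ i j, 0 ≤ M i j) {w : ι → ℝ} (hw : ∀ i, 0 < w i)
    (hwM : w ᵥ* M = w) : ∃ c : ι → ℝ, 0 ≤ c ∧ w ⬝ᵥ c = 1 ∧ M *ᵥ c = c := by
  classical
  set S : Set (ι → ℝ) := Set.Ici 0 ∩ {c | w ⬝ᵥ c = 1}
  have hSsub : S ⊆ Set.Icc 0 w⁻¹ := fun c ⟨hc0, hc1⟩ => ⟨hc0, fun i => by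
    rw [Pi.inv_apply, ← mul_one (w i)⁻¹, le_inv_mul_iff₀ (hw i), ← hc1.out]
    exact Finset.single_le_sum (fun j _ => mul_nonneg (hw j).le (hc0 j)) (Finset.mem_univ i)⟩
  have hcomp : IsCompact S :=
    isCompact_Icc.of_isClosed_subset (isClosed_Ici.inter (isClosed_eq (by fun_prop)
      continuous_const)) hSsub
  have hconv : Convex ℝ S := (convex_Ici 0).inter
    (convex_hyperplane ⟨dotProduct_add w, fun r c => dotProduct_smul r w c⟩ 1)
  obtain ⟨i₀⟩ := ‹Nonempty ι›
  have hne : S.Nonempty := ⟨Pi.single i₀ (w i₀)⁻¹, Pi.single_nonneg.2 (inv_nonneg.2 (hw i₀).le),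
    by simp [dotProduct_single, (hw i₀).ne']⟩
  have hmaps : Set.MapsTo (Matrix.toLin' M).toContinuousLinearMap S S := fun c ⟨hc0, hc1⟩ =>
    ⟨fun i => Finset.sum_nonneg fun j _ => mul_nonneg (hM i j) (hc0 j),
      by simpa [dotProduct_mulVec, hwM] using hc1⟩
  obtain ⟨c, ⟨hc0, hc1⟩, hfix⟩ :=
    (Matrix.toLin' M).toContinuousLinearMap.exists_fixedPoint_of_mapsTo_of_isCompact_of_convex
      hcomp hconv hne hmaps
  exact ⟨c, hc0, hc1, hfix⟩

theorem exists_isProbabilityMeasure_map_eq_of_map_eq_sum {α ι : Type*} [MeasurableSpace α]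
    [Fintype ι] [Nonempty ι] {T : α → α} (hT : Measurable T) (ν : ι → Measure α)
    [∀ i, IsFiniteMeasure (ν i)] (hν : ∀ i, ν i ≠ 0) (M : Matrix ι ι ℝ) (hM : ∀ i j, 0 ≤ M i j)
    (hmap : ∀ k, (ν k).map T = ∑ j, ENNReal.ofReal (M j k) • ν j) :
    ∃ c : ι → ℝ≥0∞, IsProbabilityMeasure (∑ j, c j • ν j) ∧
      (∑ j, c j • ν j).map T = ∑ j, c j • ν j := by
  set w : ι → ℝ := fun i => (ν i Set.univ).toReal
  have hνw : ∀ i, ν i Set.univ = ENNReal.ofReal (w i) := fun i =>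
    (ENNReal.ofReal_toReal (measure_ne_top _ _)).symm
  have hw : ∀ i, 0 < w i := fun i =>
    ENNReal.toReal_pos (Measure.measure_univ_ne_zero.2 (hν i)) (measure_ne_top _ _)
  -- the pushforward preserves total mass, so `w` is a left fixed vector of `M`
  have hwM : w ᵥ* M = w := funext fun k => by
    have h := congrArg (fun μ : Measure α => (μ Set.univ).toReal) (hmap k)
    simp only [Measure.map_apply hT MeasurableSet.univ, Set.preimage_univ,
      Measure.coe_finsetSum, Finset.sum_apply, Measure.smul_apply, smul_eq_mul, hνw] at h
    rw [ENNReal.toReal_sum fun j _ => ENNReal.mul_ne_top ENNReal.ofReal_ne_top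
      ENNReal.ofReal_ne_top] at h
    simp only [ENNReal.toReal_mul, ENNReal.toReal_ofReal (hM _ _),
      ENNReal.toReal_ofReal (hw _).le] at h
    simp only [vecMul, dotProduct, h, mul_comm]
  obtain ⟨c, hc0, hc1, hfix⟩ := M.exists_nonneg_mulVec_eq_self_of_vecMul_eq hM hw hwM
  refine ⟨fun j => ENNReal.ofReal (c j), ⟨?_⟩, ?_⟩
  · simp only [Measure.coe_finsetSum, Finset.sum_apply, Measure.smul_apply, smul_eq_mul, hνw,
      ← ENNReal.ofReal_mul (hc0 _)]
    rw [← ENNReal.ofReal_sum_of_nonneg fun j _ => mul_nonneg (hc0 j) (hw j).le,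
      ← ENNReal.ofReal_one, ← hc1]
    simp only [dotProduct, mul_comm]
  · rw [Measure.map_finset_sum hT.aemeasurable]
    simp only [Measure.map_smul, hmap, Finset.smul_sum, smul_smul]
    rw [Finset.sum_comm]
    refine Finset.sum_congr rfl fun j _ => ?_
    rw [← Finset.sum_smul]
    congr 1
    rw [← congrFun hfix j, mulVec, dotProduct,
      ENNReal.ofReal_sum_of_nonneg fun k _ => mul_nonneg (hM j k) (hc0 k)]
    simp only [ENNReal.ofReal_mul (hM _ _), mul_comm]

theorem map_volume_mul_add {m : ℝ} (hm : m ≠ 0) (b : ℝ) :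
    volume.map (fun x => m * x + b) = ENNReal.ofReal |m|⁻¹ • volume := by
  rw [show (fun x => m * x + b) = (· + b) ∘ (m * ·) from rfl,
    ← Measure.map_map (measurable_add_const b) (measurable_const_mul m),
    Real.map_volume_mul_left hm, Measure.map_smul, map_add_right_eq_self, abs_inv]

theorem map_volume_restrict_of_eqOn_mul_add {T : ℝ → ℝ} {s : Set ℝ} {m b : ℝ} (hm : m ≠ 0)
    (hs : MeasurableSet s) (hT : Set.EqOn T (fun x => m * x + b) s) :
    (volume.restrict s).map T = ENNReal.ofReal |m|⁻¹ • volume.restrict (T '' s) := by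
  have hA : MeasurableEmbedding fun x => m * x + b :=
    (affineHomeomorph m b hm).measurableEmbedding
  have h := hA.restrict_map volume ((fun x => m * x + b) '' s)
  rw [Set.preimage_image_eq s hA.injective] at h
  rw [Measure.map_congr ((ae_restrict_mem hs).mono hT), hT.image_eq, ← h, map_volume_mul_add hm,
    Measure.restrict_smul]

theorem Measure.restrict_biUnion_finset_eq_sum {α ι : Type*} [MeasurableSpace α] {μ : Measure α}
    {s : ι → Set α} {t : Finset ι} (hd : (t : Set ι).Pairwise (AEDisjoint μ on s))
    (hm : ∀ i ∈ t, NullMeasurableSet (s i) μ) :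
    μ.restrict (⋃ i ∈ t, s i) = ∑ i ∈ t, μ.restrict (s i) := by
  ext u hu
  rw [Measure.restrict_apply hu, Set.inter_iUnion₂, Measure.finsetSum_apply,
    measure_biUnion_finset₀
      (hd.mono' fun i j h => h.mono Set.inter_subset_right Set.inter_subset_right)
      fun i hi => hu.nullMeasurableSet.inter (hm i hi)]
  simp only [Measure.restrict_apply hu]

theorem pairwise_aedisjoint_Icc_castSucc_succ {K : ℕ} {a : Fin (K + 1) → ℝ} (ha : Monotone a) :
    Pairwise (AEDisjoint volume on fun i : Fin K => Set.Icc (a i.castSucc) (a i.succ)) := by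
  have of_lt : ∀ i j : Fin K, i < j →
      AEDisjoint volume (Set.Icc (a i.castSucc) (a i.succ)) (Set.Icc (a j.castSucc) (a j.succ)) :=
    fun i j hij => by
      have : a i.succ ≤ a j.castSucc := ha (Fin.succ_le_castSucc_iff.2 hij)
      rw [AEDisjoint, Set.Icc_inter_Icc, Real.volume_Icc, ENNReal.ofReal_eq_zero, sub_nonpos]
      exact (min_le_left _ _).trans (this.trans (le_max_right _ _))
  intro i j hij
  rcases hij.lt_or_gt with h | h
  · exact of_lt i j h
  · exact (of_lt j i h).symm

theorem map_volume_restrict_Icc_of_markov {K : ℕ} {a : Fin (K + 1) → ℝ} (ha : Monotone a)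
    {T : ℝ → ℝ} {k : Fin K} {m b : ℝ} (hm : m ≠ 0)
    (hT : Set.EqOn T (fun x => m * x + b) (Set.Icc (a k.castSucc) (a k.succ)))
    {S : Set (Fin K)}
    (hS : T '' Set.Icc (a k.castSucc) (a k.succ) = ⋃ j ∈ S, Set.Icc (a j.castSucc) (a j.succ)) :
    (volume.restrict (Set.Icc (a k.castSucc) (a k.succ))).map T =
      ∑ j, ENNReal.ofReal (S.indicator (fun _ => |m|⁻¹) j) •
        volume.restrict (Set.Icc (a j.castSucc) (a j.succ)) := by
  classical
  have hU : ⋃ j ∈ S, Set.Icc (a j.castSucc) (a j.succ) =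
      ⋃ j ∈ S.toFinset, Set.Icc (a j.castSucc) (a j.succ) := by simp
  rw [map_volume_restrict_of_eqOn_mul_add hm measurableSet_Icc hT, hS, hU,
    Measure.restrict_biUnion_finset_eq_sum
      ((pairwise_aedisjoint_Icc_castSucc_succ ha).set_pairwise _)
      fun _ _ => measurableSet_Icc.nullMeasurableSet, Finset.smul_sum]
  rw [← Finset.univ_inter S.toFinset, ← Finset.sum_ite_mem]
  refine Finset.sum_congr rfl fun j _ => ?_
  by_cases hj : j ∈ S <;> simp [hj]

theorem piecewise_linear_markov_expanding_acim_general (K : ℕ) (hK : 0 < K)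
    (a : Fin (K + 1) → ℝ)
    (hmono : StrictMono a)
    (T : ℝ → ℝ) (hTmeas : Measurable T)
    (lam : ℝ) (hlam : 1 < lam)
    (slope intercept : Fin K → ℝ)
    (haff : ∀ i : Fin K, ∀ x ∈ Set.Icc (a i.castSucc) (a i.succ),
      T x = slope i * x + intercept i)
    (hexp : ∀ i, lam ≤ |slope i|)
    (hmarkov : ∀ i : Fin K, ∃ S : Set (Fin K),
      T '' Set.Icc (a i.castSucc) (a i.succ) = ⋃ j ∈ S, Set.Icc (a j.castSucc) (a j.succ)) :
    ∃ μ : Measure ℝ, IsProbabilityMeasure μ ∧ μ ≪ volume ∧ Measure.map T μ = μ := by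
  choose S hS using hmarkov
  have : Nonempty (Fin K) := ⟨⟨0, hK⟩⟩
  have hslope : ∀ i, slope i ≠ 0 := fun i => abs_pos.1 ((zero_lt_one.trans hlam).trans_le (hexp i))
  have hν : ∀ j : Fin K, volume.restrict (Set.Icc (a j.castSucc) (a j.succ)) ≠ 0 := fun j => by
    rw [Ne, Measure.restrict_eq_zero, Real.volume_Icc, ENNReal.ofReal_eq_zero, not_le, sub_pos]
    exact hmono j.castSucc_lt_succ
  obtain ⟨c, hprob, hinv⟩ := exists_isProbabilityMeasure_map_eq_of_map_eq_sum hTmeas _ hν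
    (Matrix.of fun j k => (S k).indicator (fun _ => |slope k|⁻¹) j)
    (fun j k => Set.indicator_nonneg (fun _ _ => inv_nonneg.2 (abs_nonneg _)) j)
    fun k => map_volume_restrict_Icc_of_markov hmono.monotone (hslope k) (haff k) (hS k)
  refine ⟨_, hprob, ?_, hinv⟩
  rw [← Measure.sum_fintype]
  exact Measure.absolutelyContinuous_sum_left fun j =>
    Measure.absolutelyContinuous_restrict.smul_left (c j)

/-- A piecewise affine, uniformly expanding interval map with a finite strong Markov
partition, some iterate of each element of which covers `[0,1]`, admits an invariant
probability measure absolutely continuous with respect to Lebesgue measure. -/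
theorem piecewise_linear_markov_expanding_acim (K : ℕ) (hK : 0 < K)
    (a : Fin (K + 1) → ℝ) (ha0 : a 0 = 0) (ha1 : a (Fin.last K) = 1)
    (hmono : StrictMono a)
    (T : ℝ → ℝ) (hTmeas : Measurable T)
    (hmaps : Set.MapsTo T (Set.Icc 0 1) (Set.Icc 0 1))
    (lam : ℝ) (hlam : 1 < lam)
    (slope intercept : Fin K → ℝ)
    (haff : ∀ i : Fin K, ∀ x ∈ Set.Icc (a i.castSucc) (a i.succ),
      T x = slope i * x + intercept i)
    (hexp : ∀ i, lam ≤ |slope i|)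
    (hmarkov : ∀ i : Fin K, ∃ S : Set (Fin K),
      T '' Set.Icc (a i.castSucc) (a i.succ) = ⋃ j ∈ S, Set.Icc (a j.castSucc) (a j.succ))
    (htrans : ∀ i : Fin K, ∃ n : ℕ, T^[n] '' Set.Icc (a i.castSucc) (a i.succ) = Set.Icc 0 1) :
    ∃ μ : Measure ℝ, IsProbabilityMeasure μ ∧ μ ≪ volume ∧ Measure.map T μ = μ :=
  piecewise_linear_markov_expanding_acim_general K hK a hmono T hTmeas lam hlam slope intercept haff
    hexp hmarkov
end
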